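/- Let T be an additive category with automorphism Σ carrying a Puppe triangulated structure, and let ⟨−,−,−⟩ be the associated Toda bracket. Then for composable morphisms f : X → Y, g : Y → Z, h : Z → T, i : T → U with the relevant consecutive composites zero, the following hold whenever both sides are defined: ⟨i,h,g⟩·f ⊆ ⟨i,h,g·f⟩; ⟨i,h·g,f⟩ ⊇ ⟨i·h,g,f⟩; ⟨i,h,g·f⟩ ⊆ ⟨i,h·g,f⟩; and ⟨i·h,g,f⟩ ⊇ (Σ⁻¹i)·⟨h,g,f⟩. -/

import Mathlib

open CategoryTheory CategoryTheory.Pretriangulated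

variable {T : Type*} [Category T] [Preadditive T] [Limits.HasZeroObject T]
  [HasShift T ℤ] [∀ n : ℤ, (CategoryTheory.shiftFunctor T n).Additive]
  [Pretriangulated T]

/-- The Toda bracket `⟨h, g, f⟩ ⊆ T(ΣX, W)` of three composable morphisms in a triangulated
category: complete `f` to an exact triangle `X → Y → C → ΣX`, extend `g` over the cone `C`
and factor the resulting composite with `h` through `q : C → ΣX`. -/
def todaBracket {X Y Z W : T} (f : X ⟶ Y) (g : Y ⟶ Z) (h : Z ⟶ W) :
    Set (X⟦(1 : ℤ)⟧ ⟶ W) :=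
  { t | ∃ (C : T) (i : Y ⟶ C) (q : C ⟶ X⟦(1 : ℤ)⟧)
      (_ : Triangle.mk f i q ∈ distTriang T) (g' : C ⟶ Z),
        i ≫ g' = g ∧ q ≫ t = g' ≫ h }

/-! Each inclusion reuses a witness of the smaller bracket. Two of them only reassociate
composites. For the other two, the Toda bracket is natural in its first map: a commutative
square into that map extends (axiom TR3) to a morphism between the chosen cones, and
precomposing the old extension over the cone with it gives an extension for the new bracket. -/

lemma shift_map_comp_mem_todaBracket {X' Y' X Y Z W : T} {f' : X' ⟶ Y'} {f : X ⟶ Y}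
    {a : X' ⟶ X} {b : Y' ⟶ Y} (hab : f' ≫ b = a ≫ f) {g : Y ⟶ Z} {h : Z ⟶ W}
    {t : X⟦(1 : ℤ)⟧ ⟶ W} (ht : t ∈ todaBracket f g h) :
    a⟦(1 : ℤ)⟧' ≫ t ∈ todaBracket f' (b ≫ g) h := by
  obtain ⟨C, i, q, hdist, g', hig, hqt⟩ := ht
  obtain ⟨C', i', q', hdist'⟩ := distinguished_cocone_triangle f'
  obtain ⟨c, hic, hqc⟩ := complete_distinguished_triangle_morphism
    (Triangle.mk f' i' q') (Triangle.mk f i q) hdist' hdist a b hab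
  change C' ⟶ C at c
  change i' ≫ c = b ≫ i at hic
  change q' ≫ a⟦(1 : ℤ)⟧' = c ≫ q at hqc
  refine ⟨C', i', q', hdist', c ≫ g', ?_, ?_⟩
  · rw [← Category.assoc, hic, Category.assoc, hig]
  · rw [← Category.assoc, hqc, Category.assoc, hqt, Category.assoc]

lemma shift_map_comp_mem_todaBracket_comp {X Y Z W U : T} (f : X ⟶ Y) {g : Y ⟶ Z}
    {h : Z ⟶ W} {e : W ⟶ U} {t : Y⟦(1 : ℤ)⟧ ⟶ U} (ht : t ∈ todaBracket g h e) :
    f⟦(1 : ℤ)⟧' ≫ t ∈ todaBracket (f ≫ g) h e := by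
  simpa using shift_map_comp_mem_todaBracket (b := 𝟙 Z) (by simp) ht

lemma todaBracket_comp_left_subset {X Y Z W U : T} (f : X ⟶ Y) (g : Y ⟶ Z) (h : Z ⟶ W)
    (e : W ⟶ U) : todaBracket (f ≫ g) h e ⊆ todaBracket f (g ≫ h) e := fun t ht => by
  simpa using shift_map_comp_mem_todaBracket (a := 𝟙 X) (b := g) (by simp) ht

lemma todaBracket_comp_right_subset {X Y Z W U : T} (f : X ⟶ Y) (g : Y ⟶ Z) (h : Z ⟶ W)
    (e : W ⟶ U) : todaBracket f g (h ≫ e) ⊆ todaBracket f (g ≫ h) e := by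
  rintro t ⟨C, i, q, hdist, g', hig, hqt⟩
  exact ⟨C, i, q, hdist, g' ≫ h, by rw [← Category.assoc, hig], by rw [hqt, Category.assoc]⟩

lemma comp_mem_todaBracket_comp {X Y Z W U : T} {f : X ⟶ Y} {g : Y ⟶ Z} {h : Z ⟶ W}
    (e : W ⟶ U) {t : X⟦(1 : ℤ)⟧ ⟶ W} (ht : t ∈ todaBracket f g h) :
    t ≫ e ∈ todaBracket f g (h ≫ e) := by
  obtain ⟨C, i, q, hdist, g', hig, hqt⟩ := ht
  exact ⟨C, i, q, hdist, g', hig, by rw [← Category.assoc, hqt, Category.assoc]⟩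

theorem stmt17_general {X Y Z W U : T}
    (f : X ⟶ Y) (g : Y ⟶ Z) (h : Z ⟶ W) (e : W ⟶ U) :
    ((fun t => f⟦(1 : ℤ)⟧' ≫ t) '' todaBracket g h e ⊆ todaBracket (f ≫ g) h e) ∧
    (todaBracket f g (h ≫ e) ⊆ todaBracket f (g ≫ h) e) ∧
    (todaBracket (f ≫ g) h e ⊆ todaBracket f (g ≫ h) e) ∧
    ((fun t => t ≫ e) '' todaBracket f g h ⊆ todaBracket f g (h ≫ e)) :=
  ⟨Set.image_subset_iff.2 fun _ => shift_map_comp_mem_todaBracket_comp f,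
    todaBracket_comp_right_subset f g h e, todaBracket_comp_left_subset f g h e,
    Set.image_subset_iff.2 fun _ => comp_mem_todaBracket_comp e⟩

/-- The Toda bracket associated to a (Puppe) triangulated structure satisfies the four
juggling axioms of Heller: for composable `f : X → Y`, `g : Y → Z`, `h : Z → W`,
`e : W → U` with consecutive composites zero (so that all brackets below are defined),
`⟨e,h,g⟩·f ⊆ ⟨e,h,g∘f⟩`, `⟨e∘h,g,f⟩ ⊆ ⟨e,h∘g,f⟩`, `⟨e,h,g∘f⟩ ⊆ ⟨e,h∘g,f⟩` and
`(Σ⁻¹e)·⟨h,g,f⟩ ⊆ ⟨e∘h,g,f⟩` (stated in the suspended convention, where brackets of maps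
starting at `X` live in `T(ΣX, −)`). -/
theorem stmt17 {X Y Z W U : T}
    (f : X ⟶ Y) (g : Y ⟶ Z) (h : Z ⟶ W) (e : W ⟶ U)
    (hgf : f ≫ g = 0) (hhg : g ≫ h = 0) (heh : h ≫ e = 0) :
    ((fun t => f⟦(1 : ℤ)⟧' ≫ t) '' todaBracket g h e ⊆ todaBracket (f ≫ g) h e) ∧
    (todaBracket f g (h ≫ e) ⊆ todaBracket f (g ≫ h) e) ∧
    (todaBracket (f ≫ g) h e ⊆ todaBracket f (g ≫ h) e) ∧
    ((fun t => t ≫ e) '' todaBracket f g h ⊆ todaBracket f g (h ≫ e)) :=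
  stmt17_general f g h e
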